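/- For every ε > 0 there exists δ = δ(ε) > 0 such that every weight w on ℝ with strong dyadic smoothness constant S^{sd}_w ≤ 1+δ has smoothness constant S_w ≤ 1+ε. -/

import Mathlib

open MeasureTheory Set Filter Topology

/-- Average of `w` over the interval `[a, b)`. -/
noncomputable def avgOn (w : ℝ → ℝ) (a b : ℝ) : ℝ :=
  (b - a)⁻¹ * ∫ x in Set.Ico a b, w x

/-- A weight on `ℝ`: measurable, locally integrable, a.e. positive. -/
def IsWeight (w : ℝ → ℝ) : Prop :=
  Measurable w ∧ MeasureTheory.LocallyIntegrable w ∧ ∀ᵐ x ∂(volume : Measure ℝ), 0 < w x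

/-- Average of `w` over the dyadic interval `[k 2^n, (k+1) 2^n)`. -/
noncomputable def dyadAvg (w : ℝ → ℝ) (n k : ℤ) : ℝ :=
  avgOn w ((k : ℝ) * (2 : ℝ) ^ n) (((k : ℝ) + 1) * (2 : ℝ) ^ n)

/-- The strong dyadic smoothness constant of `w` is at most `S`: for any two adjacent
dyadic intervals `I, J` of equal length, `⟨w⟩_I ≤ S ⟨w⟩_J`. -/
def StrongDyadSmoothLE (w : ℝ → ℝ) (S : ℝ) : Prop :=
  ∀ n k : ℤ, dyadAvg w n k ≤ S * dyadAvg w n (k + 1) ∧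
    dyadAvg w n (k + 1) ≤ S * dyadAvg w n k

/-- The smoothness constant of `w` is at most `S`: for every bounded interval `I`
with halves `I₋, I₊`, both ratios `⟨w⟩_{I₋}/⟨w⟩_{I₊}` and `⟨w⟩_{I₊}/⟨w⟩_{I₋}` are `≤ S`. -/
def SmoothLE (w : ℝ → ℝ) (S : ℝ) : Prop :=
  ∀ a b : ℝ, a < b →
    avgOn w a ((a + b) / 2) ≤ S * avgOn w ((a + b) / 2) b ∧
    avgOn w ((a + b) / 2) b ≤ S * avgOn w a ((a + b) / 2)

/-! Fix a dyadic scale `s = 2 ^ n` that is a small but fixed fraction of the length of `I`.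
Chaining the hypothesis along at most `K` adjacent dyadic intervals of length `s`, every such
interval near `I` has average within a factor `S ^ K` of one reference average. Covering a half of
`I` by such intervals from outside, and filling the other half from inside, both up to two cells,
gives `⟨w⟩_{I₋} ≤ S ^ (2K) (l + 2s) / (l - 2s) ⟨w⟩_{I₊}`, where `l = |I| / 2`. Take `l / s` large,
then `S` close to `1`. -/

lemma exists_one_lt_pow_eq {x : ℝ} (hx : 1 < x) {k : ℕ} (hk : k ≠ 0) :
    ∃ S : ℝ, 1 < S ∧ S ^ k = x :=
  ⟨x ^ (k⁻¹ : ℝ), Real.one_lt_rpow hx (inv_pos.2 (Nat.cast_pos.2 (Nat.pos_of_ne_zero hk))),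
    Real.rpow_inv_natCast_pow (by linarith) hk⟩

lemma exists_mul_zpow_two_le_lt {x N : ℝ} (hx : 0 < x) (hN : 0 < N) :
    ∃ n : ℤ, N * 2 ^ n ≤ x ∧ x < 2 * N * 2 ^ n := by
  obtain ⟨n, hn₁, hn₂⟩ := exists_mem_Ico_zpow (div_pos hx hN) one_lt_two
  rw [le_div_iff₀ hN] at hn₁
  rw [div_lt_iff₀ hN, zpow_add_one₀ two_ne_zero] at hn₂
  exact ⟨n, by linarith, by linarith⟩

lemma MeasureTheory.LocallyIntegrable.integrableOn_Ico {E : Type*} [NormedAddCommGroup E]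
    {μ : Measure ℝ} {f : ℝ → E} (hf : LocallyIntegrable f μ) (a b : ℝ) :
    IntegrableOn f (Ico a b) μ :=
  (hf.integrableOn_isCompact isCompact_Icc).mono_set Ico_subset_Icc_self

section Dyadic

variable {w : ℝ → ℝ}

lemma sub_mul_avgOn {a b : ℝ} (h : a < b) : (b - a) * avgOn w a b = ∫ x in Ico a b, w x := by
  rw [avgOn, ← mul_assoc, mul_inv_cancel₀ (sub_pos.2 h).ne', one_mul]

lemma zpow_two_mul_dyadAvg (n k : ℤ) :
    (2 : ℝ) ^ n * dyadAvg w n k = ∫ x in Ico (k * (2 : ℝ) ^ n) ((k + 1) * (2 : ℝ) ^ n), w x := by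
  have h := sub_mul_avgOn (w := w) (a := k * (2 : ℝ) ^ n) (b := (k + 1) * (2 : ℝ) ^ n)
    (by have := zpow_pos (two_pos (α := ℝ)) n; linarith)
  rwa [show ((k : ℝ) + 1) * 2 ^ n - k * 2 ^ n = 2 ^ n by ring] at h

lemma dyadAvg_nonneg (hw0 : 0 ≤ᵐ[volume] w) (n k : ℤ) : 0 ≤ dyadAvg w n k :=
  mul_nonneg (inv_nonneg.2 (by have := zpow_pos (two_pos (α := ℝ)) n; linarith))
    (integral_nonneg_of_ae (ae_restrict_of_ae hw0))

lemma setIntegral_Ico_mono (hw : LocallyIntegrable w) (hw0 : 0 ≤ᵐ[volume] w) {a b c d : ℝ}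
    (hca : c ≤ a) (hbd : b ≤ d) : ∫ x in Ico a b, w x ≤ ∫ x in Ico c d, w x :=
  setIntegral_mono_set (hw.integrableOn_Ico c d) (ae_restrict_of_ae hw0)
    (Ico_subset_Ico hca hbd).eventuallyLE

lemma setIntegral_Ico_eq_sum_dyadAvg (hw : LocallyIntegrable w) (n : ℤ) {p q : ℤ} (hpq : p ≤ q) :
    ∫ x in Ico (p * (2 : ℝ) ^ n) (q * (2 : ℝ) ^ n), w x
      = ∑ j ∈ Finset.Ico p q, (2 : ℝ) ^ n * dyadAvg w n j := by
  have hs := zpow_pos (two_pos (α := ℝ)) n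
  induction q, hpq using Int.leInduction with
  | base => simp
  | succ q hpq ih =>
    have hp : (p : ℝ) * 2 ^ n ≤ q * 2 ^ n := by gcongr
    rw [← Finset.sum_Ico_add_eq_sum_Ico_add_one hpq, ← ih, zpow_two_mul_dyadAvg, Int.cast_add,
      Int.cast_one, ← setIntegral_union Ico_disjoint_Ico_same measurableSet_Ico
        (hw.integrableOn_Ico _ _) (hw.integrableOn_Ico _ _),
      Ico_union_Ico_eq_Ico hp (by linarith)]

end Dyadic

section Bounds

variable {w : ℝ → ℝ}

lemma Int.natCast_card_Ico {p q : ℤ} (hpq : p ≤ q) : ((Finset.Ico p q).card : ℝ) = q - p := by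
  rw [Int.card_Ico, ← Int.cast_natCast, Int.toNat_of_nonneg (by omega), Int.cast_sub]

lemma setIntegral_Ico_le_of_dyadAvg_le (hw : LocallyIntegrable w) (hw0 : 0 ≤ᵐ[volume] w)
    (n : ℤ) {c d B : ℝ} (hcd : c ≤ d) (hB : 0 ≤ B)
    (H : ∀ j : ℤ, c - 2 ^ n < j * 2 ^ n → j * 2 ^ n < d → dyadAvg w n j ≤ B) :
    ∫ x in Ico c d, w x ≤ (d - c + 2 * 2 ^ n) * B := by
  set s : ℝ := 2 ^ n
  have hs : 0 < s := zpow_pos two_pos n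
  set p := ⌊c / s⌋
  set q := ⌈d / s⌉
  have hpc : p * s ≤ c := (le_div_iff₀ hs).1 (Int.floor_le _)
  have hcp : c < (p + 1) * s := (div_lt_iff₀ hs).1 (Int.lt_floor_add_one _)
  have hdq : d ≤ q * s := (div_le_iff₀ hs).1 (Int.le_ceil _)
  have hqd : (q - 1) * s < d := (lt_div_iff₀ hs).1 (by linarith [Int.ceil_lt_add_one (d / s)])
  have hpq : p ≤ q := by
    have : (p : ℝ) ≤ q := le_of_mul_le_mul_right (by linarith) hs
    exact_mod_cast this
  calc ∫ x in Ico c d, w x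
      ≤ ∫ x in Ico (p * s) (q * s), w x := setIntegral_Ico_mono hw hw0 hpc hdq
    _ = ∑ j ∈ Finset.Ico p q, s * dyadAvg w n j := setIntegral_Ico_eq_sum_dyadAvg hw n hpq
    _ ≤ (Finset.Ico p q).card • (s * B) := by
        refine Finset.sum_le_card_nsmul _ _ _ fun j hj => ?_
        obtain ⟨hpj, hjq⟩ := Finset.mem_Ico.1 hj
        have hpj' : (p : ℝ) * s ≤ j * s := by gcongr
        have hjq' : (j : ℝ) * s ≤ (q - 1) * s := by gcongr; exact_mod_cast Int.le_sub_one_of_lt hjq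
        exact mul_le_mul_of_nonneg_left (H j (by linarith) (by linarith)) hs.le
    _ = (q - p) * s * B := by rw [nsmul_eq_mul, Int.natCast_card_Ico hpq]; ring
    _ ≤ (d - c + 2 * s) * B := by gcongr; linarith

lemma le_setIntegral_Ico_of_le_dyadAvg (hw : LocallyIntegrable w) (hw0 : 0 ≤ᵐ[volume] w)
    (n : ℤ) {c d A : ℝ} (hA : 0 ≤ A)
    (H : ∀ j : ℤ, c ≤ j * 2 ^ n → (j + 1) * 2 ^ n ≤ d → A ≤ dyadAvg w n j) :
    (d - c - 2 * 2 ^ n) * A ≤ ∫ x in Ico c d, w x := by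
  set s : ℝ := 2 ^ n
  have hs : 0 < s := zpow_pos two_pos n
  set p := ⌈c / s⌉
  set q := ⌊d / s⌋
  have hcp : c ≤ p * s := (div_le_iff₀ hs).1 (Int.le_ceil _)
  have hpc : (p - 1) * s < c := (lt_div_iff₀ hs).1 (by linarith [Int.ceil_lt_add_one (c / s)])
  have hqd : q * s ≤ d := (le_div_iff₀ hs).1 (Int.floor_le _)
  have hdq : d < (q + 1) * s := (div_lt_iff₀ hs).1 (Int.lt_floor_add_one _)
  have hint : 0 ≤ ∫ x in Ico c d, w x := integral_nonneg_of_ae (ae_restrict_of_ae hw0)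
  by_cases hpq : p ≤ q
  swap
  · -- no dyadic interval of length `s` fits into `[c, d)`, so `d - c < 2 s`
    have hqp : (q : ℝ) + 1 ≤ p := by exact_mod_cast Int.add_one_le_of_lt (not_le.1 hpq)
    have : (q + 1) * s ≤ p * s := by gcongr
    nlinarith
  calc (d - c - 2 * s) * A
      ≤ (q - p) * s * A := by gcongr; linarith
    _ = (Finset.Ico p q).card • (s * A) := by rw [nsmul_eq_mul, Int.natCast_card_Ico hpq]; ring
    _ ≤ ∑ j ∈ Finset.Ico p q, s * dyadAvg w n j := by
        refine Finset.card_nsmul_le_sum _ _ _ fun j hj => ?_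
        obtain ⟨hpj, hjq⟩ := Finset.mem_Ico.1 hj
        have hpj' : (p : ℝ) * s ≤ j * s := by gcongr
        have hjq' : ((j : ℝ) + 1) * s ≤ q * s := by gcongr; exact_mod_cast Int.add_one_le_of_lt hjq
        exact mul_le_mul_of_nonneg_left (H j (by linarith) (by linarith)) hs.le
    _ = ∫ x in Ico (p * s) (q * s), w x := (setIntegral_Ico_eq_sum_dyadAvg hw n hpq).symm
    _ ≤ ∫ x in Ico c d, w x := setIntegral_Ico_mono hw hw0 hcp hqd

end Bounds

section Chain

variable {f : ℤ → ℝ} {S : ℝ}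

lemma le_pow_natAbs_sub_mul (hS : 0 ≤ S) (hf : ∀ k, f k ≤ S * f (k + 1) ∧ f (k + 1) ≤ S * f k)
    (j k : ℤ) : f j ≤ S ^ (j - k).natAbs * f k := by
  have step : ∀ d : ℕ, ∀ k, f (k + d) ≤ S ^ d * f k ∧ f k ≤ S ^ d * f (k + d) := by
    intro d
    induction d with
    | zero => simp
    | succ d ih =>
      intro k
      have hk : k + ↑(d + 1) = k + 1 + d := by push_cast; ring
      obtain ⟨ih₁, ih₂⟩ := ih (k + 1)
      obtain ⟨hf₁, hf₂⟩ := hf k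
      rw [hk, pow_succ]
      constructor
      · nlinarith [pow_nonneg hS d]
      · nlinarith
  obtain ⟨d, hd⟩ : ∃ d : ℕ, (j - k).natAbs = d := ⟨_, rfl⟩
  rw [hd]
  rcases Int.natAbs_eq (j - k) with h | h <;> rw [hd] at h
  · simpa only [show k + d = j by omega] using (step d k).1
  · simpa only [show j + d = k by omega] using (step d j).2

lemma le_pow_mul_of_abs_sub_le (hS : 1 ≤ S) (hf : ∀ k, f k ≤ S * f (k + 1) ∧ f (k + 1) ≤ S * f k)
    (hf0 : ∀ k, 0 ≤ f k) {M : ℕ} {j k : ℤ} (hjk : |j - k| ≤ M) : f j ≤ S ^ M * f k :=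
  (le_pow_natAbs_sub_mul (by linarith) hf j k).trans <|
    mul_le_mul_of_nonneg_right (pow_le_pow_right₀ hS (by zify; exact hjk)) (hf0 k)

end Chain

lemma abs_sub_floor_div_le {s a : ℝ} (hs : 0 < s) {K : ℕ} {j : ℤ} (h₁ : a - s < j * s)
    (h₂ : j * s < a + K * s) : |j - ⌊a / s⌋| ≤ K := by
  set r := ⌊a / s⌋
  have hr : r * s ≤ a := (le_div_iff₀ hs).1 (Int.floor_le _)
  have hr' : a < (r + 1) * s := (div_lt_iff₀ hs).1 (Int.lt_floor_add_one _)
  have hrj : (r : ℝ) < j + 1 := lt_of_mul_lt_mul_right (by linarith) hs.le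
  have hjr : (j : ℝ) < r + 1 + K := lt_of_mul_lt_mul_right (by linarith) hs.le
  have hrj' : r < j + 1 := by exact_mod_cast hrj
  have hjr' : j < r + 1 + K := by exact_mod_cast hjr
  rw [abs_le]
  constructor <;> omega

section Comparison

variable {w : ℝ → ℝ} {S : ℝ}

lemma setIntegral_Ico_le_of_strongDyadSmoothLE (hw : LocallyIntegrable w)
    (hw0 : 0 ≤ᵐ[volume] w) (hS1 : 1 ≤ S) (hS : StrongDyadSmoothLE w S) (n : ℤ) (K : ℕ)
    {a c d c' d' : ℝ} (hc : a ≤ c) (hc' : a ≤ c') (hd : d ≤ a + K * 2 ^ n)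
    (hd' : d' ≤ a + K * 2 ^ n) (hlen : d' - c' = d - c) (h2 : 2 * 2 ^ n ≤ d - c) :
    (d - c - 2 * 2 ^ n) * ∫ x in Ico c d, w x
      ≤ S ^ (2 * K) * (d - c + 2 * 2 ^ n) * ∫ x in Ico c' d', w x := by
  set s : ℝ := 2 ^ n
  have hs : 0 < s := zpow_pos two_pos n
  set A := dyadAvg w n ⌊a / s⌋
  set P := S ^ K
  have hP : 0 < P := pow_pos (by linarith) K
  have hA : 0 ≤ A := dyadAvg_nonneg hw0 n _
  have near : ∀ j : ℤ, a - s < j * s → j * s < a + K * s →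
      dyadAvg w n j ≤ P * A ∧ A ≤ P * dyadAvg w n j := by
    intro j h₁ h₂
    have hj := abs_sub_floor_div_le hs h₁ h₂
    exact ⟨le_pow_mul_of_abs_sub_le hS1 (hS n) (dyadAvg_nonneg hw0 n) hj,
      le_pow_mul_of_abs_sub_le hS1 (hS n) (dyadAvg_nonneg hw0 n) (by rwa [abs_sub_comm])⟩
  have upper : ∫ x in Ico c d, w x ≤ (d - c + 2 * s) * (P * A) :=
    setIntegral_Ico_le_of_dyadAvg_le hw hw0 n (by linarith) (by positivity)
      fun j h₁ h₂ => (near j (by linarith) (by linarith)).1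
  have lower : (d - c - 2 * s) * (A / P) ≤ ∫ x in Ico c' d', w x := by
    rw [← hlen]
    refine le_setIntegral_Ico_of_le_dyadAvg hw hw0 n (by positivity) fun j h₁ h₂ => ?_
    exact (div_le_iff₀' hP).2 (near j (by linarith) (by linarith)).2
  calc (d - c - 2 * s) * ∫ x in Ico c d, w x
      ≤ (d - c - 2 * s) * ((d - c + 2 * s) * (P * A)) := by gcongr
    _ = P ^ 2 * (d - c + 2 * s) * ((d - c - 2 * s) * (A / P)) := by field_simp
    _ ≤ P ^ 2 * (d - c + 2 * s) * ∫ x in Ico c' d', w x := by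
        have : 0 ≤ d - c + 2 * s := by linarith
        gcongr
    _ = S ^ (2 * K) * (d - c + 2 * s) * ∫ x in Ico c' d', w x := by rw [← pow_mul, mul_comm K]

lemma avgOn_le_of_strongDyadSmoothLE (hw : LocallyIntegrable w) (hw0 : 0 ≤ᵐ[volume] w)
    (hS1 : 1 ≤ S) (hS : StrongDyadSmoothLE w S) (n : ℤ) (K : ℕ) {ε a c d c' d' : ℝ}
    (hε : 0 < ε) (hSK : S ^ (2 * K) ≤ 1 + ε / 2) (hscale : (8 + 6 * ε) * 2 ^ n ≤ ε * (d - c))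
    (hc : a ≤ c) (hc' : a ≤ c') (hd : d ≤ a + K * 2 ^ n) (hd' : d' ≤ a + K * 2 ^ n)
    (hlen : d' - c' = d - c) : avgOn w c d ≤ (1 + ε) * avgOn w c' d' := by
  set s : ℝ := 2 ^ n
  have hs : 0 < s := zpow_pos two_pos n
  have hl : 2 * s < d - c := by nlinarith
  have hJ : 0 ≤ ∫ x in Ico c' d', w x := integral_nonneg_of_ae (ae_restrict_of_ae hw0)
  have key := setIntegral_Ico_le_of_strongDyadSmoothLE hw hw0 hS1 hS n K hc hc' hd hd' hlen hl.le
  have hI : ∫ x in Ico c d, w x ≤ (1 + ε) * ∫ x in Ico c' d', w x := by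
    refine le_of_mul_le_mul_left (key.trans ?_) (sub_pos.2 hl)
    calc S ^ (2 * K) * (d - c + 2 * s) * ∫ x in Ico c' d', w x
        ≤ (1 + ε / 2) * (d - c + 2 * s) * ∫ x in Ico c' d', w x := by gcongr; linarith
      _ ≤ (d - c - 2 * s) * ((1 + ε) * ∫ x in Ico c' d', w x) := by nlinarith
  rw [avgOn, avgOn, hlen, mul_left_comm]
  exact mul_le_mul_of_nonneg_left hI (inv_nonneg.2 (by linarith))

end Comparison

theorem statement5 (ε : ℝ) (hε : 0 < ε) :
    ∃ δ : ℝ, 0 < δ ∧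
      ∀ w : ℝ → ℝ, IsWeight w → StrongDyadSmoothLE w (1 + δ) → SmoothLE w (1 + ε) := by
  obtain ⟨N, hN⟩ := exists_nat_ge ((8 + 6 * ε) / ε)
  rw [div_le_iff₀ hε] at hN
  have hN0 : 0 < N := by
    have : (0 : ℝ) < N := by nlinarith
    exact_mod_cast this
  obtain ⟨S, hS1, hSK⟩ := exists_one_lt_pow_eq (x := 1 + ε / 2) (by linarith)
    (k := 2 * (4 * N)) (by omega)
  refine ⟨S - 1, by linarith, fun w hw hsd a b hab => ?_⟩
  rw [add_sub_cancel] at hsd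
  obtain ⟨n, hn₁, hn₂⟩ := exists_mul_zpow_two_le_lt (x := (a + b) / 2 - a) (N := N)
    (by linarith) (by exact_mod_cast hN0)
  have hscale : (8 + 6 * ε) * 2 ^ n ≤ ε * ((a + b) / 2 - a) := by
    nlinarith [mul_le_mul_of_nonneg_right hN (zpow_pos two_pos n).le]
  have hwin : b ≤ a + ((4 * N : ℕ) : ℝ) * 2 ^ n := by push_cast; linarith
  have hw0 : 0 ≤ᵐ[volume] w := hw.2.2.mono fun _ hx => hx.le
  constructor
  · exact avgOn_le_of_strongDyadSmoothLE hw.2.1 hw0 hS1.le hsd n (4 * N) hε hSK.le hscale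
      le_rfl (by linarith) (by linarith) hwin (by ring)
  · exact avgOn_le_of_strongDyadSmoothLE hw.2.1 hw0 hS1.le hsd n (4 * N) hε hSK.le
      (by linarith) (by linarith) le_rfl hwin (by linarith) (by ring)
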